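/- Let N be a free abelian group with basis y₁, …, y_d, let c₁ | c₂ | ⋯ | c_d be nonnegative integers (with the convention that every integer divides 0), and let N' ⊆ N be the subgroup generated by {c_i y_i : c_i ≠ 0}, so that N/N' ≅ ℤ/c₁ℤ ⊕ ⋯ ⊕ ℤ/c_dℤ. Then Λ²N/(N ∧ N') ≅ ⊕_{1 ≤ i < j ≤ d} ℤ/c_iℤ (where ℤ/0ℤ = ℤ). In particular, if all c_i are nonzero (i.e. N' has finite index in N), then Λ²N/(N ∧ N') is a finite group. -/

import Mathlib

/-
`Λ²N` is free on the wedges `y i ∧ y j` with `i < j`. Because `c i ∣ c j` for `i ≤ j`, the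
subgroup `N ∧ N'` is spanned by the multiples `c i • (y i ∧ y j)`, `i < j`: a generator
`y k ∧ c l • y l` is `± c l` times a basis wedge, and `c l` is a multiple of the coefficient
`c (min k l)` attached to that wedge. Quotienting a free module by multiples `c p • e p` of its basis
vectors gives `∏ p, ℤ ⧸ c p`.
-/

open ExteriorAlgebra

section

open Submodule

lemma Submodule.span_setOf_and_eq_of_not_imp_eq_zero {κ R M : Type*} [Semiring R]
    [AddCommMonoid M] [Module R M] {p : κ → Prop} {v : κ → M} (hv : ∀ i, ¬p i → v i = 0) :
    span R {x | ∃ i, p i ∧ x = v i} = span R (Set.range v) := by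
  refine le_antisymm (span_mono ?_) (span_le.2 ?_)
  · rintro _ ⟨i, -, rfl⟩
    exact ⟨i, rfl⟩
  · rintro _ ⟨i, rfl⟩
    by_cases hi : p i
    · exact subset_span ⟨i, hi, rfl⟩
    · simp [hv i hi]

def ltPairEquivFinTwoOrderEmbedding (I : Type*) [LinearOrder I] :
    {p : I × I // p.1 < p.2} ≃ (Fin 2 ↪o I) where
  toFun p := OrderEmbedding.ofStrictMono ![p.1.1, p.1.2] <| by
    simpa [Fin.strictMono_iff_lt_succ] using p.2
  invFun f := ⟨(f 0, f 1), f.strictMono Fin.zero_lt_one⟩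
  left_inv p := rfl
  right_inv f := by
    ext i
    fin_cases i <;> rfl

variable {κ I R M : Type*} [LinearOrder I] [CommRing R] [AddCommGroup M] [Module R M]

namespace Module.Basis

noncomputable def toPiQuotientSpan (b : Basis κ R M) (a : κ → R) :
    M →ₗ[R] (i : κ) → R ⧸ Ideal.span {a i} :=
  LinearMap.pi fun i => (Ideal.span {a i}).mkQ ∘ₗ b.coord i

@[simp]
lemma toPiQuotientSpan_apply (b : Basis κ R M) (a : κ → R) (x : M) (i : κ) :
    b.toPiQuotientSpan a x i = Ideal.Quotient.mk _ (b.repr x i) := rfl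

lemma toPiQuotientSpan_surjective [Fintype κ] (b : Basis κ R M) (a : κ → R) :
    Function.Surjective (b.toPiQuotientSpan a) := by
  intro t
  choose v hv using fun i => Ideal.Quotient.mk_surjective (t i)
  refine ⟨b.equivFun.symm v, funext fun i => ?_⟩
  rw [toPiQuotientSpan_apply, ← b.equivFun_apply, LinearEquiv.apply_symm_apply, hv]

lemma ker_toPiQuotientSpan [Fintype κ] (b : Basis κ R M) (a : κ → R) :
    LinearMap.ker (b.toPiQuotientSpan a) = span R (Set.range fun i => a i • b i) := by
  classical
  refine le_antisymm (fun x hx => ?_) (span_le.2 ?_)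
  · rw [← b.sum_repr x]
    refine sum_mem fun i _ => ?_
    obtain ⟨k, hk⟩ := Ideal.mem_span_singleton.1 (Ideal.Quotient.eq_zero_iff_mem.1 (congrFun hx i))
    rw [← b.coord_apply, hk, mul_comm, mul_smul]
    exact smul_mem _ _ (subset_span ⟨i, rfl⟩)
  · rintro _ ⟨i, rfl⟩
    ext j
    by_cases hij : i = j
    · subst hij
      simp
    · simp [hij]

noncomputable def quotientSpanSMulEquiv [Fintype κ] (b : Basis κ R M) (a : κ → R) :
    (M ⧸ span R (Set.range fun i => a i • b i)) ≃ₗ[R] (i : κ) → R ⧸ Ideal.span {a i} :=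
  (quotEquivOfEq _ _ (b.ker_toPiQuotientSpan a).symm).trans
    ((b.toPiQuotientSpan a).quotKerEquivOfSurjective (b.toPiQuotientSpan_surjective a))

noncomputable def exteriorPowerTwo (b : Basis I R M) :
    Basis {p : I × I // p.1 < p.2} R (⋀[R]^2 M) :=
  (b.exteriorPower 2).reindex
    ((ltPairEquivFinTwoOrderEmbedding I).trans Set.powersetCard.ofFinEmbEquiv).symm

lemma coe_exteriorPowerTwo_apply (b : Basis I R M) (p : {p : I × I // p.1 < p.2}) :
    ↑(b.exteriorPowerTwo p) = ι R (b p.1.1) * ι R (b p.1.2) := by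
  simp [exteriorPowerTwo, exteriorPower.ιMulti_family, ιMulti_apply]
  rfl

end Module.Basis

namespace ExteriorAlgebra

/-- `M ∧ P` -/
def wedgeSubmodule (P : Submodule R M) : Submodule R (ExteriorAlgebra R M) :=
  span R {z | ∃ n n' : M, n' ∈ P ∧ z = ι R n * ι R n'}

lemma ι_mul_ι_swap (x y : M) : ι R x * ι R y = -(ι R y * ι R x) :=
  eq_neg_of_add_eq_zero_left (ι_add_mul_swap x y)

lemma wedgeSubmodule_span_smul_basis (b : Module.Basis I R M) (c : I → R)
    (hc : ∀ i j, i ≤ j → c i ∣ c j) :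
    wedgeSubmodule (span R (Set.range fun i => c i • b i)) =
      span R (Set.range fun p : {p : I × I // p.1 < p.2} =>
        c p.1.1 • (ι R (b p.1.1) * ι R (b p.1.2))) := by
  set T := span R (Set.range fun p : {p : I × I // p.1 < p.2} =>
        c p.1.1 • (ι R (b p.1.1) * ι R (b p.1.2)))
  have ι_mul_ι_smul_mem (k i : I) : ι R (b k) * ι R (c i • b i) ∈ T := by
    rw [map_smul, mul_smul_comm]
    rcases lt_trichotomy k i with hki | rfl | hik
    · obtain ⟨t, ht⟩ := hc k i hki.le
      rw [ht, mul_comm, mul_smul]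
      exact smul_mem _ _ (subset_span ⟨⟨(k, i), hki⟩, rfl⟩)
    · rw [ι_sq_zero, smul_zero]
      exact zero_mem _
    · rw [ι_mul_ι_swap, smul_neg]
      exact neg_mem (subset_span ⟨⟨(i, k), hik⟩, rfl⟩)
  let B : M →ₗ[R] M →ₗ[R] ExteriorAlgebra R M := (LinearMap.mul R _).compl₁₂ (ι R) (ι R)
  have hmap₂_le : map₂ B ⊤ (span R (Set.range fun i => c i • b i)) ≤ T := by
    rw [← b.span_eq, map₂_span_span, span_le]
    rintro _ ⟨_, ⟨k, rfl⟩, _, ⟨i, rfl⟩, rfl⟩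
    exact ι_mul_ι_smul_mem k i
  refine le_antisymm (span_le.2 ?_) (span_le.2 ?_)
  · rintro _ ⟨n, n', hn', rfl⟩
    exact hmap₂_le (apply_mem_map₂ B mem_top hn')
  · rintro _ ⟨p, rfl⟩
    have hmem : c p.1.1 • b p.1.1 ∈ span R (Set.range fun i => c i • b i) :=
      subset_span ⟨p.1.1, rfl⟩
    have := neg_mem (subset_span ⟨b p.1.2, _, hmem, rfl⟩ :
      ι R (b p.1.2) * ι R (c p.1.1 • b p.1.1) ∈ wedgeSubmodule _)
    rwa [map_smul, mul_smul_comm, ι_mul_ι_swap, smul_neg, neg_neg] at this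

lemma comap_subtype_wedgeSubmodule_span_smul_basis (b : Module.Basis I R M)
    (c : I → R) (hc : ∀ i j, i ≤ j → c i ∣ c j) :
    (wedgeSubmodule (span R (Set.range fun i => c i • b i))).comap (⋀[R]^2 M).subtype =
      span R (Set.range fun p => c p.1.1 • b.exteriorPowerTwo p) := by
  rw [wedgeSubmodule_span_smul_basis b c hc, ← comap_map_eq_of_injective
    (⋀[R]^2 M).injective_subtype (span R _), map_span, ← Set.range_comp]
  congr! with p
  simp [b.coe_exteriorPowerTwo_apply]

end ExteriorAlgebra

end

theorem stmt6 (d : ℕ) (N : Type*) [AddCommGroup N] [Module ℤ N]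
    (y : Module.Basis (Fin d) ℤ N) (c : Fin d → ℕ)
    (hdvd : ∀ i j : Fin d, i ≤ j → c i ∣ c j) :
    -- `N'` is the subgroup generated by the `c i • y i` with `c i ≠ 0`
    letI N' : Submodule ℤ N :=
      Submodule.span ℤ {x : N | ∃ i : Fin d, c i ≠ 0 ∧ x = (c i : ℤ) • y i}
    -- `N ∧ N'`, viewed as a subgroup of `Λ² N`
    letI W : Submodule ℤ ↥(⋀[ℤ]^2 N) :=
      (Submodule.span ℤ {z : ExteriorAlgebra ℤ N |
        ∃ n n' : N, n' ∈ N' ∧ z = ι ℤ n * ι ℤ n'}).comap (⋀[ℤ]^2 N).subtype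
    -- `Λ²N/(N ∧ N') ≅ ⊕_{i<j} ℤ/c_iℤ`, and it is finite if all `c i` are nonzero
    Nonempty ((↥(⋀[ℤ]^2 N) ⧸ W) ≃+
        ((p : {p : Fin d × Fin d // p.1 < p.2}) → ZMod (c p.val.1))) ∧
      ((∀ i, c i ≠ 0) → Finite (↥(⋀[ℤ]^2 N) ⧸ W)) := by
  -- The statement's `(c i : ℤ) • y i` is `zsmul`; with the canonical `ℤ`-module structure it is
  -- definitionally the module scalar action used by the lemmas above.
  obtain rfl : ‹Module ℤ N› = AddCommGroup.toIntModule N := Subsingleton.elim _ _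
  have hW : Submodule.comap (⋀[ℤ]^2 N).subtype
      (wedgeSubmodule (Submodule.span ℤ {x : N | ∃ i, c i ≠ 0 ∧ x = (c i : ℤ) • y i})) =
      Submodule.span ℤ (Set.range fun p => (c p.1.1 : ℤ) • y.exteriorPowerTwo p) := by
    rw [Submodule.span_setOf_and_eq_of_not_imp_eq_zero fun i hi => by simp [not_not.1 hi]]
    exact comap_subtype_wedgeSubmodule_span_smul_basis y _
      fun i j hij => Int.natCast_dvd_natCast.2 (hdvd i j hij)
  let e := (AddEquivClass.toAddEquiv
      ((Submodule.quotEquivOfEq _ _ hW).trans (y.exteriorPowerTwo.quotientSpanSMulEquiv _))).trans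
    (AddEquiv.piCongrRight fun p => (Int.quotientSpanNatEquivZMod (c p.1.1)).toAddEquiv)
  refine ⟨⟨e⟩, fun hc => ?_⟩
  have (p : {p : Fin d × Fin d // p.1 < p.2}) : NeZero (c p.1.1) := ⟨hc _⟩
  exact Finite.of_equiv _ e.symm.toEquiv
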